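/- arXiv:1202.3269 — 3 statements merged into one kernel-verified Lean document; each statement's English description precedes it below -/
import Mathlib

section
/- Let H, K, J be subgroups of the free group F_k. If H is a free factor of J and K ≤ J, then H ∩ K is a free factor of K. -/
/-- `H` is a free factor of `J`: there is a subgroup `H' ≤ J` such that `J` is the
internal free product of `H` and `H'`, i.e. the homomorphism from the (external)
free product `H ∗ H'` induced by the inclusions is injective with range `J`. -/
def IsFreeFactor {F : Type*} [Group F] (H J : Subgroup F) : Prop :=
  H ≤ J ∧ ∃ H' : Subgroup F, H' ≤ J ∧
    Function.Injective (Monoid.Coprod.lift H.subtype H'.subtype) ∧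
    (Monoid.Coprod.lift H.subtype H'.subtype).range = J

/-!
After choosing bases of `H` and of a complement `H'`, the free factor `H ≤ J` becomes the
subgroup generated by the "red" letters `α` of `FreeGroup (α ⊕ β)`, and `K` an arbitrary
subgroup. In the Schreier graph of `K` (the action groupoid on the cosets of `K`, freely
generated by one arrow per letter and coset), the cosets reached from `K` along red arrows are
those of elements of `H`. Pick a spanning tree whose paths to these red cosets are red. The loops
closed by the arrows outside the tree form a free basis of `K` (Nielsen–Schreier). The loops of
red arrows between red cosets lie in `H`, and they generate `H ∩ K`, because a red word lying in
`K` traces a closed red path at the base coset. So `H ∩ K` is generated by a subset of a basis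
of `K`, hence is a free factor of `K`.
-/

open CategoryTheory Quiver IsFreeGroupoid Function Monoid
open scoped Monoid.Coprod

universe u

noncomputable section

theorem MonoidHom.range_comp_of_surjective {G N P : Type*} [Group G] [Group N] [Group P]
    (g : N →* P) {f : G →* N} (hf : Surjective f) : (g.comp f).range = g.range := by
  rw [range_comp, range_eq_top.2 hf, ← range_eq_map]

theorem isFreeFactor_range_comp_inl {A B F : Type*} [Group A] [Group B] [Group F]
    {φ : A ∗ B →* F} (hφ : Injective φ) :
    IsFreeFactor (φ.comp Coprod.inl).range φ.range := by
  let e := MulEquiv.coprodCongr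
    (MonoidHom.ofInjective (f := φ.comp Coprod.inl) (hφ.comp Coprod.inl_injective))
    (MonoidHom.ofInjective (f := φ.comp Coprod.inr) (hφ.comp Coprod.inr_injective))
  have hlift : (Coprod.lift (φ.comp Coprod.inl).range.subtype
      (φ.comp Coprod.inr).range.subtype).comp e.toMonoidHom = φ := by
    ext <;> rfl
  refine ⟨?_, (φ.comp Coprod.inr).range, ?_, ?_, ?_⟩
  any_goals rw [MonoidHom.range_comp]; exact Subgroup.map_le_range _ _
  · rw [← hlift] at hφ
    exact (Injective.of_comp_iff' _ e.bijective).1 hφ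
  · exact (MonoidHom.range_comp_of_surjective _ e.surjective).symm.trans (congrArg _ hlift)

theorem IsFreeFactor.map {F F' : Type*} [Group F] [Group F'] {A B : Subgroup F}
    (h : IsFreeFactor A B) {φ : F →* F'} (hφ : Injective φ) :
    IsFreeFactor (A.map φ) (B.map φ) := by
  obtain ⟨-, B', -, hinj, hrange⟩ := h
  have := isFreeFactor_range_comp_inl (φ := φ.comp (Coprod.lift A.subtype B'.subtype))
    (hφ.comp hinj)
  rwa [MonoidHom.comp_assoc, Coprod.lift_comp_inl, MonoidHom.range_comp, MonoidHom.range_comp,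
    Subgroup.range_subtype, hrange] at this

def FreeGroup.sumMulEquivCoprod {α β : Type*} :
    FreeGroup (α ⊕ β) ≃* FreeGroup α ∗ FreeGroup β :=
  MonoidHom.toMulEquiv (lift (Sum.elim (Coprod.inl ∘ of) (Coprod.inr ∘ of)))
    (Coprod.lift (map Sum.inl) (map Sum.inr)) (by ext (a | b) <;> simp) (by ext <;> simp)

open scoped Classical in
theorem FreeGroupBasis.isFreeFactor_closure_image {F ι : Type*} [Group F] {K : Subgroup F}
    (b : FreeGroupBasis ι K) (s : Set ι) :
    IsFreeFactor (Subgroup.closure ((fun i => (b i : F)) '' s)) K := by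
  let e := FreeGroup.sumMulEquivCoprod.symm.trans
    ((FreeGroup.freeGroupCongr (Equiv.sumCompl (· ∈ s))).trans b.repr.symm)
  have hinl : (K.subtype.comp e.toMonoidHom).comp Coprod.inl =
      FreeGroup.lift fun i : s => (b i : F) := by
    ext i
    rw [FreeGroup.lift_apply_of]
    rfl
  have hrange : (K.subtype.comp e.toMonoidHom).range = K := by
    rw [MonoidHom.range_comp_of_surjective _ e.surjective, Subgroup.range_subtype]
  have := isFreeFactor_range_comp_inl (φ := K.subtype.comp e.toMonoidHom)
    (K.subtype_injective.comp e.injective)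
  rw [Set.image_eq_range, ← FreeGroup.range_lift_eq_closure]
  rwa [hinl, hrange] at this

namespace FreeGroup

/-- Mathlib's `actionGroupoidIsFree` labels the generating arrows by the non-canonical
`IsFreeGroup.Generators`; here they are labelled by the letters of `X`. -/
instance (priority := high) actionGroupoidIsFree {X A : Type u} [MulAction (FreeGroup X) A] :
    IsFreeGroupoid (ActionCategory (FreeGroup X) A) where
  quiverGenerators := ⟨fun a b => { x : X // of x • a.back = b.back }⟩
  of e := ⟨of e.val, e.property⟩
  unique_lift := by
    intro Y _ f
    let f' : X → (A → Y) ⋊[mulAutArrow] FreeGroup X := fun x =>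
      ⟨fun b => @f ⟨(), _⟩ ⟨(), b⟩ ⟨x, smul_inv_smul _ b⟩, of x⟩
    obtain ⟨F', hF', uF'⟩ : ∃! F' : FreeGroup X →* (A → Y) ⋊[mulAutArrow] FreeGroup X,
        ∀ x, F' (of x) = f' x :=
      ⟨lift f', fun _ => lift_apply_of, fun F hF => ext_hom _ _ fun x => by
        rw [hF, lift_apply_of]⟩
    refine ⟨ActionCategory.uncurry F' ?_, ?_, fun E hE => ?_⟩
    · suffices SemidirectProduct.rightHom.comp F' = MonoidHom.id _ from
        DFunLike.ext_iff.mp this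
      ext x
      rw [MonoidHom.comp_apply, hF']
      rfl
    · rintro ⟨⟨⟩, a : A⟩ ⟨⟨⟩, b⟩ ⟨x, h : of x • a = b⟩
      change (F' (of _)).left _ = _
      rw [hF']
      cases inv_smul_eq_iff.mpr h.symm
      rfl
    · have : ActionCategory.curry E = F' := by
        refine uF' _ fun x => ?_
        ext
        · exact hE _ _ ⟨x, smul_inv_smul _ _⟩
        · rfl
      apply Functor.hext
      · intro
        apply Unit.ext
      · refine ActionCategory.cases fun _ _ => ?_
        subst this
        rfl

end FreeGroup

namespace IsFreeGroupoid.SpanningTree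

variable {G : Type u} [Groupoid.{u} G] [IsFreeGroupoid G]
  (T : WideSubquiver (Symmetrify <| Generators G)) [Arborescence T]

theorem map_homOfPath_eq_one {X : Type u} [Group X] (F : G ⥤ CategoryTheory.SingleObj X)
    (hF : ∀ (a b : Generators G) (e : a ⟶ b), e ∈ wideSubquiverSymmetrify T a b →
      F.map (of e) = 1) {a : G} (p : Path (root T) a) :
    F.map (homOfPath T p) = 1 := by
  induction p with
  | nil => exact F.map_id _
  | cons p e ih =>
    erw [F.map_comp, SingleObj.comp_as_mul, ih, mul_one]
    rcases e with ⟨e | e, he⟩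
    · exact hF _ _ e (Or.inl he)
    · rw [F.map_inv, SingleObj.inv_as_inv, inv_eq_one]
      exact hF _ _ e (Or.inr he)

theorem map_loopOfHom {X : Type u} [Group X] (F : G ⥤ CategoryTheory.SingleObj X)
    (hF : ∀ (a b : Generators G) (e : a ⟶ b), e ∈ wideSubquiverSymmetrify T a b →
      F.map (of e) = 1) {a b : G} (q : a ⟶ b) :
    F.map (loopOfHom T q) = F.map q := by
  simp only [loopOfHom, treeHom, Functor.map_comp, Functor.map_inv, SingleObj.comp_as_mul,
    SingleObj.inv_as_inv, map_homOfPath_eq_one T F hF, inv_one, mul_one, one_mul]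

theorem loopOfHom_root (x : End (show G from root T)) : loopOfHom T x = x := by
  have hroot : treeHom T (show G from root T) = 𝟙 _ := treeHom_root T
  change treeHom T _ ≫ x ≫ inv (treeHom T _) = x
  erw [hroot, IsIso.inv_id, Category.id_comp]
  exact Category.comp_id x

open scoped Classical in
/-- `endIsFree` only asserts `IsFreeGroup`; the basis itself is needed here. -/
def endBasis :
    FreeGroupBasis ((wideSubquiverEquivSetTotal <| wideSubquiverSymmetrify T)ᶜ : Set _)
      (End (show G from root T)) :=
  FreeGroupBasis.ofUniqueLift _ (fun e => loopOfHom T (of e.val.hom)) <| by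
    intro X _ f
    let f' : Labelling (Generators G) X := fun a b e =>
      if h : e ∈ wideSubquiverSymmetrify T a b then 1 else f ⟨⟨a, b, e⟩, h⟩
    obtain ⟨F', hF', uF'⟩ := unique_lift f'
    have hF'T : ∀ (a b : Generators G) (e : a ⟶ b), e ∈ wideSubquiverSymmetrify T a b →
        F'.map (of e) = 1 := fun a b e he => (hF' a b e).trans (dif_pos he)
    refine ⟨F'.mapEnd _, fun ⟨⟨a, b, e⟩, h⟩ => ?_, fun E hE => ?_⟩
    · erw [Functor.mapEnd_apply, map_loopOfHom T F' hF'T, hF']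
      exact dif_neg h
    · have : functorOfMonoidHom T E = F' := by
        refine uF' _ fun a b e => ?_
        change E (loopOfHom T _) = dite _ _ _
        split_ifs with h
        · rw [loopOfHom_eq_id T e h]
          exact E.map_one
        · exact hE ⟨⟨a, b, e⟩, h⟩
      ext x
      subst this
      exact congrArg E (loopOfHom_root T x).symm

theorem endBasis_apply
    (e : ((wideSubquiverEquivSetTotal <| wideSubquiverSymmetrify T)ᶜ : Set _)) :
    endBasis T e = loopOfHom T (of e.val.hom) :=
  FreeGroup.lift_apply_of

end IsFreeGroupoid.SpanningTree

namespace WideSubquiver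

variable {V : Type*} [Quiver V] (S : WideSubquiver V) (r : S) [RootedConnected r]

def geodesicSubtree : WideSubquiver V := fun a b =>
  { e | ∃ he : e ∈ S a b, ∃ p : Path r a, shortestPath r b = p.cons ⟨e, he⟩ }

instance : Arborescence (S.geodesicSubtree r) :=
  arborescenceMk (show V from r) (fun a => (shortestPath r (show S from a)).length)
    (by
      rintro a b ⟨e, he, p, h⟩
      rw [h]
      exact Nat.lt_succ_of_le (shortest_path_spec r p))
    (by
      rintro a b c ⟨e, he, p, h⟩ ⟨f, hf, q, j⟩
      cases h.symm.trans j
      constructor <;> rfl)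
    (by
      intro b
      rcases hp : shortestPath r b with (_ | ⟨p, ⟨e, he⟩⟩)
      · exact Or.inl rfl
      · exact Or.inr ⟨_, ⟨⟨e, he, p, hp⟩⟩⟩)

end WideSubquiver

namespace SchreierGraph

open IsFreeGroupoid.SpanningTree

variable {α β : Type u} (K : Subgroup (FreeGroup (α ⊕ β)))

local notation "F" => FreeGroup (α ⊕ β)
local notation "Q" => FreeGroup (α ⊕ β) ⧸ K
local notation "G" => ActionCategory (FreeGroup (α ⊕ β)) (FreeGroup (α ⊕ β) ⧸ K)
local notation "Γ" => Symmetrify (Generators G)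

abbrev redSubgroup : Subgroup (FreeGroup (α ⊕ β)) := (FreeGroup.map Sum.inl).range

def redCosets : Set Q := QuotientGroup.mk '' (redSubgroup (α := α) (β := β) : Set F)

variable {K} in
theorem smul_mem_redCosets {g : F} (hg : g ∈ redSubgroup) {q : Q} (hq : q ∈ redCosets K) :
    g • q ∈ redCosets K := by
  obtain ⟨h, hh, rfl⟩ := hq
  exact ⟨g * h, mul_mem hg hh, rfl⟩

variable {K} in
theorem smul_mem_redCosets_iff {g : F} (hg : g ∈ redSubgroup) {q : Q} :
    g • q ∈ redCosets K ↔ q ∈ redCosets K :=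
  ⟨fun h => inv_smul_smul g q ▸ smul_mem_redCosets (inv_mem hg) h, smul_mem_redCosets hg⟩

theorem of_mem_redSubgroup {x : α ⊕ β} (hx : x.isLeft) : FreeGroup.of x ∈ redSubgroup := by
  obtain ⟨y, rfl⟩ := Sum.isLeft_iff.1 hx
  exact ⟨FreeGroup.of y, FreeGroup.map.of⟩

variable {K} in
def label : ∀ {a b : Γ}, (a ⟶ b) → α ⊕ β
  | _, _, .inl e => e.val
  | _, _, .inr e => e.val

variable {K} in
theorem mem_redCosets_iff_of_isLeft {a b : Γ} (e : a ⟶ b) (he : (label e).isLeft) :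
    (show G from a).back ∈ redCosets K ↔ (show G from b).back ∈ redCosets K := by
  rcases e with e | e
  · rw [← e.2]
    exact (smul_mem_redCosets_iff (of_mem_redSubgroup he)).symm
  · rw [← e.2]
    exact smul_mem_redCosets_iff (of_mem_redSubgroup he)

/-- A path in this subquiver ending at a red coset never uses a non-red arrow (it could not
return to the red cosets afterwards), so the geodesic tree of this subquiver reaches the red
cosets along red paths. -/
def redOrOutward : WideSubquiver Γ := fun _ b =>
  { e | (label e).isLeft ∨ (show G from b).back ∉ redCosets K }

def base : redOrOutward K := show G from ((1 : F) : Q)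

theorem nonempty_path_map_inl_smul (g : FreeGroup α) (q : Q)
    (hq : Nonempty (Path (base K) (show G from q))) :
    Nonempty (Path (base K) (show G from (FreeGroup.map (Sum.inl (β := β)) g • q : Q))) := by
  induction g using FreeGroup.induction_on generalizing q with
  | C1 => simpa using hq
  | of x =>
    obtain ⟨p⟩ := hq
    exact ⟨p.cons ⟨Sum.inl ⟨Sum.inl x, rfl⟩, Or.inl rfl⟩⟩
  | inv_of x _ =>
    obtain ⟨p⟩ := hq
    exact ⟨p.cons ⟨Sum.inr ⟨Sum.inl x, smul_inv_smul _ q⟩, Or.inl rfl⟩⟩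
  | mul g h ihg ihh =>
    rw [map_mul, mul_smul]
    exact ihg _ (ihh q hq)

theorem nonempty_path_of_mem_redCosets {q : Q} (hq : q ∈ redCosets K) :
    Nonempty (Path (base K) (show G from q)) := by
  obtain ⟨_, ⟨g, rfl⟩, rfl⟩ := hq
  simpa using nonempty_path_map_inl_smul K g _ ⟨Path.nil⟩

instance : RootedConnected (base K) := by
  have : RootedConnected (show Γ from base K) :=
    @generators_connected G _ ActionCategory.instIsConnectedOfIsPretransitiveOfNonempty _ _
  refine ⟨fun b => ?_⟩
  obtain ⟨p⟩ := this.nonempty_path b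
  induction p with
  | nil => exact ⟨Path.nil⟩
  | @cons c d p e ih =>
    by_cases hd : (show G from d).back ∈ redCosets K
    · exact nonempty_path_of_mem_redCosets K hd
    · obtain ⟨q⟩ := ih
      exact ⟨q.cons ⟨e, Or.inr hd⟩⟩

abbrev tree : WideSubquiver Γ := (redOrOutward K).geodesicSubtree (base K)

-- so that morphisms of `G` are those of its groupoid structure, as in `IsFreeGroupoid`
instance (priority := high) : Category G := Groupoid.toCategory

def val {a b : G} (f : a ⟶ b) : F := f.val

theorem val_comp {a b c : G} (f : a ⟶ b) (g : b ⟶ c) : val K (f ≫ g) = val K g * val K f :=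
  rfl

theorem val_inv {a b : G} (f : a ⟶ b) : val K (inv f) = (val K f)⁻¹ := by
  rw [eq_inv_iff_mul_eq_one, ← val_comp, IsIso.hom_inv_id]
  rfl

theorem val_homOfPath_mem {a : G} (p : Path (root (tree K)) a)
    (ha : a.back ∈ redCosets K) : val K (homOfPath (tree K) p) ∈ redSubgroup := by
  induction p with
  | nil => exact one_mem _
  | cons p e ih =>
    obtain ⟨e, he, -⟩ := e
    have hred : (label e).isLeft := he.resolve_right (not_not_intro ha)
    change val K (homOfPath (tree K) p ≫ _) ∈ _
    rw [val_comp]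
    refine mul_mem ?_ (ih ((mem_redCosets_iff_of_isLeft e hred).2 ha))
    rcases e with e | e
    · exact of_mem_redSubgroup hred
    · exact (val_inv K _).symm ▸ inv_mem (of_mem_redSubgroup hred)

def treeVal (q : Q) : F := val K (treeHom (tree K) (show G from q))

theorem treeVal_mem {q : Q} (hq : q ∈ redCosets K) : treeVal K q ∈ redSubgroup := by
  unfold treeVal treeHom
  exact val_homOfPath_mem K _ hq

theorem treeVal_one : treeVal K ((1 : F) : Q) = 1 :=
  congrArg (val K) (treeHom_root (tree K) : treeHom (tree K) (show G from root (tree K)) = 𝟙 _)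

def schreierElt (g : F) (q : Q) : F := (treeVal K (g • q))⁻¹ * g * treeVal K q

theorem schreierElt_one (q : Q) : schreierElt K 1 q = 1 := by
  simp [schreierElt]

theorem schreierElt_mul (g h : F) (q : Q) :
    schreierElt K (g * h) q = schreierElt K g (h • q) * schreierElt K h q := by
  simp only [schreierElt, mul_smul]
  group

theorem schreierElt_inv (g : F) (q : Q) :
    schreierElt K g⁻¹ q = (schreierElt K g (g⁻¹ • q))⁻¹ := by
  simp only [schreierElt, smul_inv_smul]
  group

theorem schreierElt_of_mem {x : α ⊕ β} (hx : x.isLeft) {q : Q} (hq : q ∈ redCosets K) :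
    schreierElt K (FreeGroup.of x) q ∈ redSubgroup := by
  have hxq := (smul_mem_redCosets_iff (of_mem_redSubgroup hx)).2 hq
  exact mul_mem (mul_mem (inv_mem (treeVal_mem K hxq)) (of_mem_redSubgroup hx)) (treeVal_mem K hq)

theorem val_loopOfHom : ∀ ⦃a b : G⦄ (f : a ⟶ b),
    val K (loopOfHom (tree K) f) = schreierElt K (val K f) a.back :=
  ActionCategory.cases fun t g => by
    have hg : val K (ActionCategory.homOfPair t g) = g := rfl
    erw [val_comp, val_comp, val_inv, hg]
    simp only [schreierElt, ActionCategory.coe_back, smul_inv_smul]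
    rfl

abbrev schreierIndex : Set (Total (Generators G)) :=
  (wideSubquiverEquivSetTotal <| wideSubquiverSymmetrify (tree K))ᶜ

def schreierBasis : FreeGroupBasis (schreierIndex K) K :=
  (endBasis (tree K)).map (ActionCategory.endMulEquivSubgroup K)

theorem schreierBasis_apply (s : schreierIndex K) :
    (schreierBasis K s : F) =
      schreierElt K (FreeGroup.of s.1.hom.1) (show G from s.1.left).back := by
  erw [schreierBasis, FreeGroupBasis.map_apply, endBasis_apply]
  exact val_loopOfHom K (of s.1.hom)

def redIndices : Set (schreierIndex K) :=
  { s | s.1.hom.1.isLeft ∧ (show G from s.1.left).back ∈ redCosets K }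

def redBasisSpan : Subgroup F :=
  Subgroup.closure ((fun s => (schreierBasis K s : F)) '' redIndices K)

theorem schreierElt_of_mem_closure {x : α ⊕ β} (hx : x.isLeft) {q : Q}
    (hq : q ∈ redCosets K) :
    schreierElt K (FreeGroup.of x) q ∈ redBasisSpan K := by
  let e : (show Generators G from (q : G)) ⟶
      (show Generators G from ((FreeGroup.of x • q : Q) : G)) := ⟨x, rfl⟩
  by_cases he : e ∈ wideSubquiverSymmetrify (tree K) _ _
  · have := val_loopOfHom K (of e)
    rw [loopOfHom_eq_id _ e he] at this
    exact this ▸ one_mem _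
  · exact Subgroup.subset_closure
      ⟨⟨⟨_, _, e⟩, he⟩, ⟨hx, hq⟩, schreierBasis_apply K _⟩

theorem schreierElt_map_inl_mem_closure (g : FreeGroup α) {q : Q} (hq : q ∈ redCosets K) :
    schreierElt K (FreeGroup.map Sum.inl g) q ∈ redBasisSpan K := by
  induction g using FreeGroup.induction_on generalizing q with
  | C1 =>
    rw [map_one, schreierElt_one]
    exact one_mem _
  | of x => exact FreeGroup.map.of ▸ schreierElt_of_mem_closure K rfl hq
  | inv_of x ih =>
    rw [map_inv, schreierElt_inv]
    exact inv_mem (ih ((smul_mem_redCosets_iff (inv_mem ⟨_, rfl⟩)).2 hq))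
  | mul g h ihg ihh =>
    rw [map_mul, schreierElt_mul]
    exact mul_mem (ihg (smul_mem_redCosets ⟨h, rfl⟩ hq)) (ihh hq)

theorem redBasisSpan_eq : redBasisSpan K = redSubgroup ⊓ K := by
  refine le_antisymm (Subgroup.closure_le _ |>.2 ?_) ?_
  · rintro _ ⟨s, ⟨hx, hq⟩, rfl⟩
    refine ⟨?_, (schreierBasis K s).2⟩
    change (schreierBasis K s : F) ∈ redSubgroup
    rw [schreierBasis_apply]
    exact schreierElt_of_mem K hx hq
  · rintro _ ⟨⟨g, rfl⟩, hgK⟩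
    have := schreierElt_map_inl_mem_closure K g (q := ((1 : F) : Q)) ⟨1, one_mem _, rfl⟩
    have hfix : FreeGroup.map (Sum.inl (β := β)) g • ((1 : F) : Q) = ((1 : F) : Q) := by
      rw [MulAction.Quotient.smul_mk, smul_eq_mul, mul_one, QuotientGroup.eq, mul_one]
      exact inv_mem hgK
    rwa [schreierElt, hfix, treeVal_one, inv_one, one_mul, mul_one] at this

end SchreierGraph

theorem isFreeFactor_inf_range_map_inl {α β : Type u} (K : Subgroup (FreeGroup (α ⊕ β))) :
    IsFreeFactor ((FreeGroup.map Sum.inl).range ⊓ K) K := by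
  rw [← SchreierGraph.redBasisSpan_eq]
  exact (SchreierGraph.schreierBasis K).isFreeFactor_closure_image _

theorem IsFreeFactor.exists_freeGroup_sum {F : Type u} [Group F] [IsFreeGroup F]
    {H J : Subgroup F} (h : IsFreeFactor H J) :
    ∃ (α β : Type u) (ψ : FreeGroup (α ⊕ β) →* F), Injective ψ ∧ ψ.range = J ∧
      (FreeGroup.map Sum.inl).range.map ψ = H := by
  obtain ⟨-, H', -, hinj, hrange⟩ := h
  let e := FreeGroup.sumMulEquivCoprod.trans
    (MulEquiv.coprodCongr (IsFreeGroup.mulEquiv H) (IsFreeGroup.mulEquiv H'))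
  let ψ := (Coprod.lift H.subtype H'.subtype).comp e.toMonoidHom
  have hψH : ψ.comp (FreeGroup.map Sum.inl) = H.subtype.comp (IsFreeGroup.mulEquiv H) := by
    ext
    rfl
  refine ⟨_, _, ψ, hinj.comp e.injective,
    (MonoidHom.range_comp_of_surjective _ e.surjective).trans hrange, ?_⟩
  rw [MonoidHom.map_range, hψH, MonoidHom.range_comp_of_surjective _ (MulEquiv.surjective _),
    H.range_subtype]

theorem IsFreeFactor.inf_of_le {F : Type u} [Group F] [IsFreeGroup F] {H K J : Subgroup F}
    (hHJ : IsFreeFactor H J) (hKJ : K ≤ J) : IsFreeFactor (H ⊓ K) K := by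
  obtain ⟨α, β, ψ, hψ, hψJ, hψH⟩ := hHJ.exists_freeGroup_sum
  have := (isFreeFactor_inf_range_map_inl (K.comap ψ)).map hψ
  rwa [Subgroup.map_inf _ _ _ hψ, hψH, Subgroup.map_comap_eq, hψJ, inf_eq_right.2 hKJ] at this

end

/-- If `H` is a free factor of `J` and `K ≤ J`, then `H ∩ K` is a free factor of `K`. -/
theorem inf_free_factor_of_le (k : ℕ) (H K J : Subgroup (FreeGroup (Fin k)))
    (hHJ : IsFreeFactor H J) (hKJ : K ≤ J) :
    IsFreeFactor (H ⊓ K) K :=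
  hHJ.inf_of_le hKJ
end

section
/- Let u ∈ F_k be a nontrivial element which is not a proper power, let d ≥ 2, and set w = u^d. Then the set of w-critical subgroups is Crit(w) = { ⟨u^m⟩ : 1 ≤ m < d and m divides d }; in particular π(w) = 1 and |Crit(w)| = δ(d) − 1, where δ(d) is the number of positive divisors of d. -/
/-- The rank of a subgroup: the minimal number of generators (`⊤` if the subgroup is
not finitely generated). For subgroups of free groups this is the size of a basis. -/
noncomputable def rkS {F : Type*} [Group F] (J : Subgroup F) : ℕ∞ :=
  sInf {r : ℕ∞ | ∃ S : Set F, Subgroup.closure S = J ∧ S.encard = r}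

/-- The primitivity rank of `H`:
`π(H) = min { rk J : H ≤ J ≤ F and H is not a free factor of J }`, and `∞` (i.e. `⊤`)
if no such `J` exists. -/
noncomputable def primRank {F : Type*} [Group F] (H : Subgroup F) : ℕ∞ :=
  sInf {r : ℕ∞ | ∃ J : Subgroup F, H ≤ J ∧ ¬ IsFreeFactor H J ∧ rkS J = r}

/-- The set of `H`-critical subgroups: the subgroups attaining the minimum in the
definition of the primitivity rank of `H`. -/
def Crit {F : Type*} [Group F] (H : Subgroup F) : Set (Subgroup F) :=
  {J | H ≤ J ∧ ¬ IsFreeFactor H J ∧ rkS J = primRank H}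



/-!
A subgroup `J` of rank one containing `w = u ^ d` is cyclic, `J = ⟨g⟩` with `g ^ n = u ^ d`.
By Nielsen–Schreier `⟨g, u⟩` is free, and a free group generated by two elements satisfying a
nontrivial relation has rank at most one (compare exponent sums), so `g` and `u` are powers of a
common `c`. As `u` is not a proper power, `⟨c⟩ = ⟨u⟩`, hence `J = ⟨u ^ m⟩` with `m ∣ d`.
Conversely `⟨u ^ d⟩` is a free factor of `⟨u ^ m⟩` only if `m = d`: a retraction onto `⟨u ^ d⟩`
would send `u ^ m` to a `d / m`-th root of `u ^ d` inside `⟨u ^ d⟩`. Since rank-zero subgroups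
are trivial, `π(w) = 1` is attained by `⟨u⟩`.
-/

open Subgroup

def IsProperPower {M : Type*} [Monoid M] (u : M) : Prop :=
  ∃ (v : M) (e : ℕ), 2 ≤ e ∧ u = v ^ e

section Group

variable {G : Type*} [Group G]

theorem isFreeFactor_refl (H : Subgroup G) : IsFreeFactor H H := by
  have hfst : (Monoid.Coprod.inl : H →* Monoid.Coprod H (⊥ : Subgroup G)).comp
      Monoid.Coprod.fst = .id _ := Monoid.Coprod.hom_ext rfl (Subsingleton.elim _ _)
  have hlift : Monoid.Coprod.lift H.subtype (⊥ : Subgroup G).subtype =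
      H.subtype.comp Monoid.Coprod.fst := Monoid.Coprod.hom_ext rfl (Subsingleton.elim _ _)
  refine ⟨le_rfl, ⊥, bot_le, ?_, ?_⟩
  · rw [hlift]
    exact H.subtype_injective.comp
      (Function.LeftInverse.injective (g := Monoid.Coprod.inl) (DFunLike.congr_fun hfst))
  · rw [Monoid.Coprod.range_lift, range_subtype, range_subtype, sup_bot_eq]

theorem IsFreeFactor.exists_retraction {H J : Subgroup G} (h : IsFreeFactor H J) :
    ∃ ρ : J →* H, ∀ (x : G) (hx : x ∈ H), (ρ ⟨x, h.1 hx⟩ : G) = x := by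
  obtain ⟨-, H', -, hinj, hrange⟩ := id h
  let e := (MonoidHom.ofInjective hinj).trans (MulEquiv.subgroupCongr hrange)
  refine ⟨Monoid.Coprod.fst.comp e.symm.toMonoidHom, fun x hx => ?_⟩
  have he : e.symm ⟨x, h.1 hx⟩ = Monoid.Coprod.inl ⟨x, hx⟩ :=
    e.symm_apply_eq.2 (Subtype.ext (by simp [e, MonoidHom.ofInjective_apply]))
  show ((Monoid.Coprod.fst (e.symm ⟨x, _⟩) : H) : G) = x
  rw [he, Monoid.Coprod.fst_apply_inl]

theorem not_isFreeFactor_zpowers_pow {x : G} (hx : ¬IsOfFinOrder x) {s : ℕ} (hs : 2 ≤ s) :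
    ¬IsFreeFactor (zpowers (x ^ s)) (zpowers x) := by
  intro h
  obtain ⟨ρ, hρ⟩ := h.exists_retraction
  obtain ⟨t, ht⟩ := mem_zpowers_iff.1 (ρ ⟨x, mem_zpowers x⟩).2
  have hpow : x ^ (s : ℤ) = x ^ ((s : ℤ) * (s * t)) := calc
    x ^ (s : ℤ) = ρ ⟨x ^ s, _⟩ := by rw [zpow_natCast, hρ _ (mem_zpowers _)]
    _ = (ρ ⟨x, mem_zpowers x⟩ : G) ^ s := by rw [← SubgroupClass.coe_pow, ← map_pow]; rfl
    _ = x ^ ((s : ℤ) * (s * t)) := by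
      rw [← ht, ← zpow_natCast, ← zpow_natCast, ← zpow_mul, ← zpow_mul]
      ring_nf
  have hst : (s : ℤ) * t = 1 := (mul_eq_left₀ (by omega)).1
    (injective_zpow_iff_not_isOfFinOrder.2 hx hpow).symm
  rcases Int.eq_one_or_neg_one_of_mul_eq_one hst with h1 | h1 <;> omega

theorem exists_closure_eq_encard_eq_rkS (J : Subgroup G) :
    ∃ S : Set G, closure S = J ∧ S.encard = rkS J :=
  csInf_mem (s := {r | ∃ S : Set G, closure S = J ∧ S.encard = r}) ⟨_, J, closure_eq J, rfl⟩

theorem eq_bot_of_rkS_eq_zero {J : Subgroup G} (h : rkS J = 0) : J = ⊥ := by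
  obtain ⟨S, hS, hcard⟩ := exists_closure_eq_encard_eq_rkS J
  rw [h, Set.encard_eq_zero] at hcard
  rw [← hS, hcard, Subgroup.closure_empty]

theorem exists_eq_zpowers_of_rkS_eq_one {J : Subgroup G} (h : rkS J = 1) :
    ∃ g : G, J = zpowers g := by
  obtain ⟨S, hS, hcard⟩ := exists_closure_eq_encard_eq_rkS J
  obtain ⟨g, rfl⟩ := Set.encard_eq_one.1 (hcard.trans h)
  exact ⟨g, by rw [← hS, zpowers_eq_closure]⟩

theorem rkS_zpowers {x : G} (hx : x ≠ 1) : rkS (zpowers x) = 1 := by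
  refine le_antisymm (sInf_le ⟨{x}, (zpowers_eq_closure x).symm, Set.encard_singleton x⟩) ?_
  rw [Order.one_le_iff_ne_zero]
  intro h
  exact hx (by simpa [eq_bot_of_rkS_eq_zero h] using mem_zpowers x)

theorem primRank_eq_one {H J : Subgroup G} (hH : H ≠ ⊥) (hHJ : H ≤ J)
    (hJ : ¬IsFreeFactor H J) (hrk : rkS J = 1) : primRank H = 1 := by
  refine le_antisymm (sInf_le ⟨J, hHJ, hJ, hrk⟩) (le_sInf ?_)
  rintro r ⟨J', hHJ', -, rfl⟩
  rw [Order.one_le_iff_ne_zero]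
  intro h
  exact hH (eq_bot_iff.2 (eq_bot_of_rkS_eq_zero h ▸ hHJ'))

theorem primRank_zpowers_pow {u : G} (hu : ¬IsOfFinOrder u) {d : ℕ} (hd : 2 ≤ d) :
    primRank (zpowers (u ^ d)) = 1 := by
  have hud : u ^ d ≠ 1 := fun h => hu (isOfFinOrder_iff_pow_eq_one.2 ⟨d, by omega, h⟩)
  refine primRank_eq_one (by simpa using hud) (zpowers_le.2 (pow_mem (mem_zpowers u) d))
    (not_isFreeFactor_zpowers_pow hu hd) (rkS_zpowers fun h => hu (h ▸ IsOfFinOrder.one))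

theorem zpowers_eq_zpowers_of_mem {u c : G} (hu : u ≠ 1) (hnp : ¬IsProperPower u)
    (h : u ∈ zpowers c) : zpowers c = zpowers u := by
  obtain ⟨i, rfl⟩ := mem_zpowers_iff.1 h
  obtain ⟨c', hc', n, hn⟩ : ∃ c', zpowers c' = zpowers c ∧ ∃ n : ℕ, c ^ i = c' ^ n := by
    obtain ⟨n, rfl | rfl⟩ := Int.eq_nat_or_neg i
    · exact ⟨c, rfl, n, zpow_natCast c n⟩
    · exact ⟨c⁻¹, zpowers_inv, n, by rw [zpow_neg, zpow_natCast, inv_pow]⟩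
  have hn1 : n = 1 := by
    have : n ≠ 0 := by rintro rfl; exact hu (hn.trans (pow_zero c'))
    have : ¬2 ≤ n := fun h2 => hnp ⟨c', n, h2, hn⟩
    omega
  rw [hn, hn1, pow_one, hc']

theorem dvd_of_pow_mem_zpowers_pow {u : G} (hu : ¬IsOfFinOrder u) {m d : ℕ}
    (h : u ^ d ∈ zpowers (u ^ m)) : m ∣ d := by
  obtain ⟨t, ht⟩ := mem_zpowers_iff.1 h
  rw [← zpow_natCast, ← zpow_natCast, ← zpow_mul] at ht
  exact Int.natCast_dvd_natCast.1 ⟨t, (injective_zpow_iff_not_isOfFinOrder.2 hu ht).symm⟩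

theorem exists_dvd_zpowers_eq_zpowers_pow {u g : G} (hu : ¬IsOfFinOrder u) {d : ℕ}
    (hg : g ∈ zpowers u) (hd : u ^ d ∈ zpowers g) :
    ∃ m : ℕ, m ∣ d ∧ zpowers g = zpowers (u ^ m) := by
  obtain ⟨i, rfl⟩ := mem_zpowers_iff.1 hg
  have hi : zpowers (u ^ i) = zpowers (u ^ i.natAbs) := by
    obtain ⟨n, rfl | rfl⟩ := Int.eq_nat_or_neg i
    · rw [zpow_natCast, Int.natAbs_natCast]
    · rw [zpow_neg, zpowers_inv, zpow_natCast, Int.natAbs_neg, Int.natAbs_natCast]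
  exact ⟨i.natAbs, dvd_of_pow_mem_zpowers_pow hu (hi ▸ hd), hi⟩

theorem ncard_setOf_zpowers_pow {u : G} (hu : ¬IsOfFinOrder u) {d : ℕ} (hd : d ≠ 0) :
    {J : Subgroup G | ∃ m : ℕ, 1 ≤ m ∧ m < d ∧ m ∣ d ∧ J = zpowers (u ^ m)}.ncard =
      d.divisors.card - 1 := by
  have himage : {J : Subgroup G | ∃ m : ℕ, 1 ≤ m ∧ m < d ∧ m ∣ d ∧ J = zpowers (u ^ m)} =
      (fun m : ℕ => zpowers (u ^ m)) '' ↑(d.divisors.erase d) := by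
    ext J
    simp only [Set.mem_ofPred_eq, Set.mem_image, Finset.coe_erase, Set.mem_sdiff, Finset.mem_coe,
      Nat.mem_divisors, Set.mem_singleton_iff]
    constructor
    · rintro ⟨m, -, hmd, hdvd, rfl⟩
      exact ⟨m, ⟨⟨hdvd, hd⟩, hmd.ne⟩, rfl⟩
    · rintro ⟨m, ⟨⟨hdvd, -⟩, hmd⟩, rfl⟩
      have := Nat.le_of_dvd (Nat.pos_of_ne_zero hd) hdvd
      exact ⟨m, Nat.pos_of_dvd_of_pos hdvd (Nat.pos_of_ne_zero hd), by omega, hdvd, rfl⟩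
  have hinj : Function.Injective fun m : ℕ => zpowers (u ^ m) :=
    fun m n (hmn : zpowers (u ^ m) = zpowers (u ^ n)) =>
      Nat.dvd_antisymm (dvd_of_pow_mem_zpowers_pow hu (hmn ▸ mem_zpowers (u ^ n)))
        (dvd_of_pow_mem_zpowers_pow hu (hmn ▸ mem_zpowers (u ^ m)))
  rw [himage, Set.ncard_image_of_injective _ hinj, Set.ncard_coe_finset,
    Finset.card_erase_of_mem (Nat.mem_divisors_self d hd)]

end Group

theorem Int.exists_addMonoidHom_ne_zero_of_zsmul_eq {X Y : ℤ × ℤ} {δ ν : ℤ} (hδ : δ ≠ 0)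
    (h : δ • X = ν • Y) : ∃ χ : ℤ × ℤ →+ ℤ, χ ≠ 0 ∧ χ X = 0 ∧ χ Y = 0 := by
  by_cases hY : Y = 0
  · have hX : X = 0 := (smul_eq_zero.1 (h.trans (by rw [hY, smul_zero]))).resolve_left hδ
    exact ⟨AddMonoidHom.fst ℤ ℤ, fun h0 => by simpa using DFunLike.congr_fun h0 (1, 0),
      by simp [hX], by simp [hY]⟩
  · let χ : ℤ × ℤ →+ ℤ := Y.2 • AddMonoidHom.fst ℤ ℤ - Y.1 • AddMonoidHom.snd ℤ ℤ
    have hχ : ∀ z, χ z = Y.2 * z.1 - Y.1 * z.2 := fun z => by simp [χ]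
    have hχY : χ Y = 0 := by rw [hχ]; ring
    refine ⟨χ, fun h0 => hY ?_, ?_, hχY⟩
    · have h1 := DFunLike.congr_fun h0 (1, 0)
      have h2 := DFunLike.congr_fun h0 (0, 1)
      simp only [hχ, AddMonoidHom.zero_apply] at h1 h2
      ext <;> simp_all
    · have := congrArg χ h
      rw [map_zsmul, map_zsmul, hχY, smul_zero, smul_eq_mul] at this
      exact (mul_eq_zero.1 this).resolve_left hδ

namespace FreeGroup

variable {ι : Type*}

theorem subsingleton_of_closure_pair_eq_top {x y : FreeGroup ι} {δ ν : ℤ}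
    (hgen : closure {x, y} = ⊤) (hδ : δ ≠ 0) (h : x ^ δ = y ^ ν) : Subsingleton ι := by
  classical
  refine ⟨fun a b => by_contra fun hab => ?_⟩
  let expSum : FreeGroup ι →* Multiplicative (ℤ × ℤ) :=
    FreeGroup.lift fun i => .ofAdd (if i = a then 1 else 0, if i = b then 1 else 0)
  have hsurj : Function.Surjective expSum := fun z =>
    ⟨of a ^ z.toAdd.1 * of b ^ z.toAdd.2, Multiplicative.toAdd.injective <| by
      ext <;> simp [expSum, hab, Ne.symm hab]⟩
  obtain ⟨χ, hχ, hX, hY⟩ := Int.exists_addMonoidHom_ne_zero_of_zsmul_eq (X := (expSum x).toAdd)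
    (Y := (expSum y).toAdd) hδ (by rw [← toAdd_zpow, ← toAdd_zpow, ← map_zpow, ← map_zpow, h])
  have hker : (AddMonoidHom.toMultiplicative χ).comp expSum = 1 :=
    MonoidHom.eq_of_eqOn_dense hgen (by rintro _ (rfl | rfl) <;> simpa)
  refine hχ (AddMonoidHom.ext fun z => ?_)
  obtain ⟨g, hg⟩ := hsurj (.ofAdd z)
  simpa [hg] using DFunLike.congr_fun hker g

theorem isCyclic_of_subsingleton [Subsingleton ι] : IsCyclic (FreeGroup ι) := by
  rcases isEmpty_or_nonempty ι with hι | ⟨⟨a⟩⟩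
  · infer_instance
  · have := uniqueOfSubsingleton a
    infer_instance

end FreeGroup

theorem IsFreeGroup.isCyclic_closure_pair_of_zpow_eq {G : Type*} [Group G] [IsFreeGroup G]
    {x y : G} {δ ν : ℤ} (hδ : δ ≠ 0) (h : x ^ δ = y ^ ν) : IsCyclic (closure {x, y}) := by
  let S := closure {x, y}
  -- `S` is free by Nielsen–Schreier (the instance `subgroupIsFreeOfIsFree`)
  let e := IsFreeGroup.toFreeGroup S
  let x' : S := ⟨x, subset_closure (by simp)⟩
  let y' : S := ⟨y, subset_closure (by simp)⟩
  have hgen : closure {e x', e y'} = ⊤ := by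
    have : closure {x', y'} = ⊤ := by
      rw [← closure_closure_coe_preimage (k := {x, y})]
      congr 1
      ext z
      simp [x', y', Subtype.ext_iff]
    rw [← Set.image_pair, ← MonoidHom.coe_coe e, ← MonoidHom.map_closure, this,
      map_top_of_surjective _ e.surjective]
  have hrel : e x' ^ δ = e y' ^ ν := by
    rw [← map_zpow, ← map_zpow]
    exact congrArg e (Subtype.ext h)
  have := FreeGroup.subsingleton_of_closure_pair_eq_top hgen hδ hrel
  exact e.isCyclic.2 FreeGroup.isCyclic_of_subsingleton

namespace FreeGroup

variable {α : Type*}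

theorem exists_dvd_zpowers_eq_zpowers_pow_of_not_isProperPower {u g : FreeGroup α}
    (hu : u ≠ 1) (hnp : ¬IsProperPower u) {d : ℕ} (hd : d ≠ 0) (h : u ^ d ∈ zpowers g) :
    ∃ m : ℕ, m ∣ d ∧ zpowers g = zpowers (u ^ m) := by
  obtain ⟨n, hn⟩ := mem_zpowers_iff.1 h
  have hn0 : n ≠ 0 := by
    rintro rfl
    exact hu ((pow_eq_one_iff_left hd).1 (hn.symm.trans (zpow_zero g)))
  obtain ⟨c, hc⟩ := (closure {g, u}).isCyclic_iff_exists_zpowers_eq_top.1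
    (IsFreeGroup.isCyclic_closure_pair_of_zpow_eq hn0 (hn.trans (zpow_natCast u d).symm))
  have hcu : zpowers c = zpowers u :=
    zpowers_eq_zpowers_of_mem hu hnp (hc ▸ subset_closure (by simp))
  exact exists_dvd_zpowers_eq_zpowers_pow (not_isOfFinOrder_of_isMulTorsionFree hu)
    (hcu ▸ hc ▸ subset_closure (by simp)) h

theorem crit_zpowers_pow {u : FreeGroup α} (hu : u ≠ 1) (hnp : ¬IsProperPower u) {d : ℕ}
    (hd : 2 ≤ d) : Crit (zpowers (u ^ d)) =
      {J | ∃ m : ℕ, 1 ≤ m ∧ m < d ∧ m ∣ d ∧ J = zpowers (u ^ m)} := by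
  ext J
  simp only [Crit, primRank_zpowers_pow (not_isOfFinOrder_of_isMulTorsionFree hu) hd,
    Set.mem_ofPred_eq]
  constructor
  · rintro ⟨hHJ, hff, hrk⟩
    obtain ⟨g, rfl⟩ := exists_eq_zpowers_of_rkS_eq_one hrk
    obtain ⟨m, hmd, hJ⟩ := exists_dvd_zpowers_eq_zpowers_pow_of_not_isProperPower hu hnp
      (by omega) (hHJ (mem_zpowers _))
    have hm0 : m ≠ 0 := by rintro rfl; rw [zero_dvd_iff] at hmd; omega
    have hmd' : m ≠ d := by rintro rfl; exact hff (hJ ▸ isFreeFactor_refl _)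
    exact ⟨m, by omega, lt_of_le_of_ne (Nat.le_of_dvd (by omega) hmd) hmd', hmd, hJ⟩
  · rintro ⟨m, hm, hmd, ⟨s, rfl⟩, rfl⟩
    have hs : 2 ≤ s := by by_contra! hs; interval_cases s <;> omega
    have hum : u ^ m ≠ 1 := fun h => hu ((pow_eq_one_iff_left (by omega)).1 h)
    rw [pow_mul]
    exact ⟨zpowers_le.2 (pow_mem (mem_zpowers _) s),
      not_isFreeFactor_zpowers_pow (not_isOfFinOrder_of_isMulTorsionFree hum) hs, rkS_zpowers hum⟩

end FreeGroup

open FreeGroup in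
/-- Let `u ∈ F_k` be nontrivial and not a proper power, `d ≥ 2` and `w = u^d`. Then
`Crit(w) = { ⟨u^m⟩ : 1 ≤ m < d, m ∣ d }`; in particular `π(w) = 1` and
`|Crit(w)| = δ(d) - 1`, where `δ(d)` is the number of positive divisors of `d`. -/
theorem crit_of_proper_power (k : ℕ) (u : FreeGroup (Fin k)) (hu : u ≠ 1)
    (hnp : ¬ ∃ (v : FreeGroup (Fin k)) (e : ℕ), 2 ≤ e ∧ u = v ^ e)
    (d : ℕ) (hd : 2 ≤ d) (w : FreeGroup (Fin k)) (hw : w = u ^ d) :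
    Crit (Subgroup.closure {w}) =
        {J : Subgroup (FreeGroup (Fin k)) |
          ∃ m : ℕ, 1 ≤ m ∧ m < d ∧ m ∣ d ∧ J = Subgroup.closure {u ^ m}} ∧
      primRank (Subgroup.closure {w}) = 1 ∧
      (Crit (Subgroup.closure {w})).ncard = d.divisors.card - 1 := by
  subst hw
  simp only [← zpowers_eq_closure]
  have hu' := not_isOfFinOrder_of_isMulTorsionFree hu
  rw [crit_zpowers_pow hu hnp hd, ncard_setOf_zpowers_pow hu' (by omega)]
  exact ⟨rfl, primRank_zpowers_pow hu' hd, rfl⟩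
end

section
/- Let H ≤ L ≤ J be finitely generated subgroups of the free group F_k with L a free factor of J. Then Φ_{H,L}(n) = Φ_{H,J}(n) for every n ∈ ℕ; that is, the expected number of common fixed points of the image of H under a uniformly random homomorphism is the same whether the homomorphism is chosen uniformly from Hom(L, S_n) or from Hom(J, S_n). -/
/-- `Φ_{H,L}(n)`: the expected number of common fixed points of `α_{L,n}(H)`, where
`α_{L,n}` is a uniformly random homomorphism in `Hom(L, S_n)`. By linearity of
expectation this is `Σ_{i} #{φ : φ(h)(i) = i for all h ∈ H} / |Hom(L, S_n)|`. -/
noncomputable def Phi {F : Type*} [Group F] (H L : Subgroup F) (hHL : H ≤ L) (n : ℕ) : ℚ :=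
  (∑ i : Fin n,
      (Nat.card {φ : ↥L →* Equiv.Perm (Fin n) //
          ∀ x : ↥H, φ (Subgroup.inclusion hHL x) i = i} : ℚ)) /
    (Nat.card (↥L →* Equiv.Perm (Fin n)) : ℚ)

lemma finite_monoidHom_of_fg (G T : Type*) [Group G] [Group T] [Finite T]
    (hG : Group.FG G) : Finite (G →* T) := by
  obtain ⟨S, hS, hfin⟩ := Group.fg_iff.mp hG
  haveI := hfin.to_subtype
  refine Finite.of_injective (fun φ : G →* T => (fun x : S => φ x)) ?_
  intro φ ψ h
  exact MonoidHom.eq_of_eqOn_dense hS fun x hx => congrFun h ⟨x, hx⟩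

/-- If `H ≤ L ≤ J` are finitely generated subgroups of `F_k` with `L` a free factor of
`J`, then `Φ_{H,L}(n) = Φ_{H,J}(n)` for every `n`. -/
theorem phi_eq_of_free_factor (k : ℕ) (H L J : Subgroup (FreeGroup (Fin k)))
    (hH : H.FG) (hL : L.FG) (hJ : J.FG) (hHL : H ≤ L) (hLJ : L ≤ J)
    (hff : IsFreeFactor L J) :
    ∀ n : ℕ, Phi H L hHL n = Phi H J (hHL.trans hLJ) n := by
  intro n
  obtain ⟨-, L', hL'J, hinj, hrange⟩ := hff
  set S := Equiv.Perm (Fin n)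
  -- the mul equiv from the coproduct to J
  let e : (Monoid.Coprod ↥L ↥L') ≃* ↥J :=
    (MonoidHom.ofInjective hinj).trans (MulEquiv.subgroupCongr hrange)
  have he : ∀ y : ↥L, e (Monoid.Coprod.inl y) = Subgroup.inclusion hLJ y := by
    intro y
    apply Subtype.ext
    rfl
  -- precomposition equivalence
  let E1 : (↥J →* S) ≃ ((Monoid.Coprod ↥L ↥L') →* S) :=
    { toFun := fun φ => φ.comp e.toMonoidHom
      invFun := fun ψ => ψ.comp e.symm.toMonoidHom
      left_inv := fun φ => MonoidHom.ext fun x => by simp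
      right_inv := fun ψ => MonoidHom.ext fun x => by simp }
  let E : (↥J →* S) ≃ ((↥L →* S) × (↥L' →* S)) :=
    E1.trans Monoid.Coprod.liftEquiv.symm
  have hE1 : ∀ (φ : ↥J →* S) (y : ↥L), (E φ).1 y = φ (Subgroup.inclusion hLJ y) := by
    intro φ y
    show φ (e (Monoid.Coprod.inl y)) = _
    rw [he]
  -- cardinalities
  haveI hfinJ : Finite (↥J →* S) :=
    finite_monoidHom_of_fg _ _ ((Group.fg_iff_subgroup_fg J).mpr hJ)
  haveI hfinL' : Finite (↥L' →* S) := by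
    refine Finite.of_injective (fun χ : ↥L' →* S => E.symm (1, χ)) ?_
    intro a b hab
    have := E.symm.injective hab
    exact (Prod.mk.injEq _ _ _ _).mp this |>.2
  have hc : (0 : ℚ) < (Nat.card (↥L' →* S) : ℚ) := by
    exact_mod_cast Nat.card_pos
  -- numerator equivalences
  have hnum : ∀ i : Fin n,
      Nat.card {φ : ↥J →* S // ∀ x : ↥H, φ (Subgroup.inclusion (hHL.trans hLJ) x) i = i}
        = Nat.card {ψ : ↥L →* S // ∀ x : ↥H, ψ (Subgroup.inclusion hHL x) i = i}
          * Nat.card (↥L' →* S) := by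
    intro i
    have hincl : ∀ x : ↥H, Subgroup.inclusion hLJ (Subgroup.inclusion hHL x)
        = Subgroup.inclusion (hHL.trans hLJ) x := fun x => rfl
    have e2 : {φ : ↥J →* S // ∀ x : ↥H, φ (Subgroup.inclusion (hHL.trans hLJ) x) i = i}
        ≃ {p : (↥L →* S) × (↥L' →* S) // ∀ x : ↥H, p.1 (Subgroup.inclusion hHL x) i = i} := by
      refine Equiv.subtypeEquiv E fun φ => ?_
      constructor
      · intro h x
        rw [hE1, hincl]
        exact h x
      · intro h x
        have := h x
        rw [hE1, hincl] at this
        exact this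
    have e3 : {p : (↥L →* S) × (↥L' →* S) // ∀ x : ↥H, p.1 (Subgroup.inclusion hHL x) i = i}
        ≃ {ψ : ↥L →* S // ∀ x : ↥H, ψ (Subgroup.inclusion hHL x) i = i} × (↥L' →* S) :=
      { toFun := fun p => (⟨p.1.1, p.2⟩, p.1.2)
        invFun := fun q => ⟨(q.1.1, q.2), q.1.2⟩
        left_inv := fun p => rfl
        right_inv := fun q => rfl }
    rw [← Nat.card_prod]
    exact Nat.card_congr (e2.trans e3)
  have hden : Nat.card (↥J →* S)
      = Nat.card (↥L →* S) * Nat.card (↥L' →* S) := by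
    rw [← Nat.card_prod]; exact Nat.card_congr E
  -- conclude
  unfold Phi
  rw [hden]
  have : ∀ i : Fin n,
      ((Nat.card {φ : ↥J →* S // ∀ x : ↥H,
          φ (Subgroup.inclusion (hHL.trans hLJ) x) i = i} : ℚ))
        = (Nat.card {ψ : ↥L →* S // ∀ x : ↥H, ψ (Subgroup.inclusion hHL x) i = i} : ℚ)
          * (Nat.card (↥L' →* S) : ℚ) := by
    intro i; rw [hnum i]; push_cast; ring
  rw [Finset.sum_congr rfl (fun i _ => this i), ← Finset.sum_mul]
  push_cast
  rw [mul_div_mul_right _ _ (ne_of_gt hc)]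
end
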